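/- Let Φ_K be the indicator of [-1,1] (Fourier transform of the sinc kernel K(x) = sin(x)/(πx)). If θ ∈ L¹(ℝ) is continuous with ∫|Φ_θ(w)||w|^{s-1} dw < ∞ for s > 1, then the smoothed inversion θ_h(x) = (1/(2πh)) ∫ e^{-iwx/h} Φ_K(w) Φ_θ(w/h) dw satisfies |θ_h(x) - θ(x)| ≤ (h^{s-1}/π) ∫_{|y|≥1/h} |y|^{s-1} |Φ_θ(y)| dy for all x, hence sup_x |θ_h(x) - θ(x)| = o(h^{s-1}) as h → 0. -/

import Mathlib

open MeasureTheory Complex Real Filter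

open scoped FourierTransform Topology

/-- approximation error of the sinc-smoothed Fourier inversion
`θ_h(x) = (1/(2πh)) ∫ e^{-iwx/h} Φ_K(w) Φ_θ(w/h) dw` with `Φ_K = 𝟙_{[-1,1]}`:
`|θ_h(x) − θ(x)| ≤ (h^{s-1}/π) ∫_{|y| ≥ 1/h} |y|^{s-1}|Φ_θ(y)| dy` for all `x`,
hence `sup_x |θ_h(x) − θ(x)| = o(h^{s-1})` as `h → 0+`. -/
theorem smoothed_inversion_bound
    (θ : ℝ → ℂ) (hθ : Integrable θ) (hcont : Continuous θ)
    (Φθ : ℝ → ℂ) (hΦ : ∀ w, Φθ w = ∫ t : ℝ, θ t * Complex.exp (Complex.I * w * t))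
    (ΦK : ℝ → ℂ) (hK : ΦK = Set.indicator (Set.Icc (-1:ℝ) 1) (fun _ => (1:ℂ)))
    (s : ℝ) (hs : 1 < s)
    (hweight : Integrable (fun w : ℝ => ‖Φθ w‖ * |w| ^ (s - 1)))
    (θh : ℝ → ℝ → ℂ)
    (hθh : ∀ h x, θh h x =
      (1 / (2 * π * h)) * ∫ w : ℝ, Complex.exp (-Complex.I * w * x / h) * ΦK w * Φθ (w / h)) :
    (∀ h : ℝ, 0 < h → ∀ x : ℝ,
      ‖θh h x - θ x‖ ≤ (h ^ (s - 1) / π) *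
        ∫ y in {y : ℝ | 1 / h ≤ |y|}, |y| ^ (s - 1) * ‖Φθ y‖) ∧
    (fun h : ℝ => ⨆ x : ℝ, ‖θh h x - θ x‖)
      =o[nhdsWithin 0 (Set.Ioi 0)] fun h : ℝ => h ^ (s - 1) := by
  have hπ : (0:ℝ) < π := Real.pi_pos
  -- relation to the mathlib Fourier transform
  have hA : ∀ w : ℝ, Φθ w = 𝓕 θ (-(w / (2 * π))) := by
    intro w
    rw [hΦ w, Real.fourier_real_eq_integral_exp_smul]
    refine congrArg (integral volume) (funext fun t => ?_)
    rw [smul_eq_mul]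
    have h2 : (-2*π*t*(-(w/(2*π))) : ℝ) = w * t := by
      field_simp
    rw [show (-2 * π * t * -(w / (2 * π)) : ℝ) = w * t from h2]
    rw [mul_comm]
    congr 1
    push_cast
    ring
  have hFc : Continuous (𝓕 θ) :=
    VectorFourier.fourierIntegral_continuous Real.continuous_fourierChar
      (by exact continuous_inner) hθ
  have hΦcont : Continuous Φθ := by
    have : Φθ = fun w => 𝓕 θ (-(w / (2 * π))) := funext hA
    rw [this]
    exact hFc.comp (by continuity)
  set C : ℝ := ∫ t : ℝ, ‖θ t‖ with hC
  have hnorm1 : ∀ (w t : ℝ), ‖θ t * Complex.exp (Complex.I * w * t)‖ = ‖θ t‖ := by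
    intro w t
    rw [norm_mul, show Complex.I * w * t = ((w*t : ℝ) : ℂ) * Complex.I by push_cast; ring]
    simp [Complex.norm_exp]
  have hCb : ∀ w : ℝ, ‖Φθ w‖ ≤ C := by
    intro w
    rw [hΦ w]
    refine (norm_integral_le_integral_norm _).trans_eq ?_
    simp_rw [hnorm1 w, hC]
  have hΦint : Integrable Φθ := by
    refine Integrable.mono'
      (g := fun w => Set.indicator (Set.Icc (-1:ℝ) 1) (fun _ => C) w + ‖Φθ w‖ * |w| ^ (s-1))
      ?_ hΦcont.aestronglyMeasurable (ae_of_all _ fun w => ?_)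
    · exact ((integrable_indicator_iff measurableSet_Icc).mpr
        (integrableOn_const measure_Icc_lt_top.ne)).add hweight
    · by_cases hw : |w| ≤ 1
      · have hmem : w ∈ Set.Icc (-1:ℝ) 1 := by
          rw [Set.mem_Icc]; constructor <;> [linarith [neg_abs_le w]; linarith [le_abs_self w]]
        simp only [Set.indicator_of_mem hmem]
        have : (0:ℝ) ≤ ‖Φθ w‖ * |w| ^ (s-1) := by positivity
        calc ‖Φθ w‖ ≤ C := hCb w
          _ ≤ _ := by linarith
      · push_neg at hw
        have hmem : w ∉ Set.Icc (-1:ℝ) 1 := by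
          rw [Set.mem_Icc]; intro ⟨h1, h2⟩
          rcases abs_cases w with ⟨he, _⟩ | ⟨he, _⟩ <;> linarith
        simp only [Set.indicator_of_notMem hmem, zero_add]
        have h1 : (1:ℝ) ≤ |w| ^ (s-1) := by
          calc (1:ℝ) = 1 ^ (s-1) := (Real.one_rpow _).symm
            _ ≤ |w| ^ (s-1) := Real.rpow_le_rpow zero_le_one hw.le (by linarith)
        calc ‖Φθ w‖ = ‖Φθ w‖ * 1 := (mul_one _).symm
          _ ≤ ‖Φθ w‖ * |w| ^ (s-1) := mul_le_mul_of_nonneg_left h1 (norm_nonneg _)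
  have hFint : Integrable (𝓕 θ) := by
    have he : (𝓕 θ) = fun ξ : ℝ => Φθ ((-(2*π)) * ξ) := by
      funext ξ
      rw [hA]
      congr 1
      field_simp
    rw [he]
    exact (integrable_comp_mul_left_iff Φθ (neg_ne_zero.mpr (by positivity) : -(2*π) ≠ 0)).mpr
      hΦint
  -- Fourier inversion in our normalization
  have hInv : ∀ x : ℝ, θ x = (1/(2*π) : ℝ) • ∫ w : ℝ, Complex.exp (-Complex.I * w * x) * Φθ w := by
    intro x
    have h1 : 𝓕⁻ (𝓕 θ) x = θ x := by rw [hcont.fourierInv_fourier_eq hθ hFint]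
    rw [← h1, Real.fourierInv_eq_fourier_neg,
      Real.fourier_real_eq_integral_exp_smul]
    have h2 : (fun v : ℝ => Complex.exp (↑(-2*π*v*(-x)) * Complex.I) • 𝓕 θ v)
        = fun v : ℝ => (fun w : ℝ => Complex.exp (-Complex.I * w * x) * Φθ w) ((-(2*π)) * v) := by
      funext v
      rw [smul_eq_mul]
      have hv : 𝓕 θ v = Φθ ((-(2*π)) * v) := by rw [hA]; congr 1; field_simp
      rw [hv]
      congr 1
      push_cast
      ring
    rw [h2, MeasureTheory.Measure.integral_comp_mul_left
      (fun w : ℝ => Complex.exp (-Complex.I * w * x) * Φθ w) (-(2*π))]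
    congr 1
    rw [abs_inv, abs_neg, abs_of_pos (by positivity : (0:ℝ) < 2*π)]
    ring
  have hweight' : Integrable (fun y : ℝ => |y| ^ (s - 1) * ‖Φθ y‖) := by
    simpa [mul_comm] using hweight
  -- Part 1: the pointwise bound
  have part1 : ∀ h : ℝ, 0 < h → ∀ x : ℝ,
      ‖θh h x - θ x‖ ≤ (h ^ (s - 1) / π) *
        ∫ y in {y : ℝ | 1 / h ≤ |y|}, |y| ^ (s - 1) * ‖Φθ y‖ := by
    intro h hh x
    have hh' : (h:ℂ) ≠ 0 := by exact_mod_cast hh.ne'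
    set F : ℝ → ℂ := fun y => Complex.exp (-Complex.I * y * x) * Φθ y with hF
    have hnormF : ∀ y : ℝ, ‖F y‖ = ‖Φθ y‖ := by
      intro y
      rw [hF]
      simp only [norm_mul]
      rw [show -Complex.I * y * x = ((-(y*x) : ℝ) : ℂ) * Complex.I by push_cast; ring]
      simp [Complex.norm_exp]
    have hFint : Integrable F := by
      refine hΦint.bdd_mul (c := 1) ?_ (ae_of_all _ fun y => ?_)
      · exact (Complex.continuous_exp.comp
          ((continuous_const.mul Complex.continuous_ofReal).mul
            continuous_const)).aestronglyMeasurable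
      · rw [show -Complex.I * y * x = ((-(y*x) : ℝ) : ℂ) * Complex.I by push_cast; ring]
        simp [Complex.norm_exp]
    set A : Set ℝ := Set.Icc (-(1/h)) (1/h) with hAdef
    -- substitution in θh
    have hsub : θh h x = (1/(2*π) : ℝ) • ∫ y in A, F y := by
      rw [hθh h x]
      set G : ℝ → ℂ := fun w => Complex.exp (-Complex.I * w * x / h) * ΦK w * Φθ (w / h) with hG
      have h1 : ∫ y : ℝ, G (h * y) = |h⁻¹| • ∫ w : ℝ, G w :=
        MeasureTheory.Measure.integral_comp_mul_left G h
      have h2 : ∫ w : ℝ, G w = (h : ℝ) • ∫ y : ℝ, G (h * y) := by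
        rw [h1, smul_smul, abs_of_pos (inv_pos.mpr hh), mul_inv_cancel₀ hh.ne', one_smul]
      have h3 : (fun y : ℝ => G (h * y)) = A.indicator F := by
        funext y
        by_cases hy : y ∈ A
        · have hy1 : h * y ∈ Set.Icc (-1:ℝ) 1 := by
            obtain ⟨hy1, hy2⟩ := hy
            constructor
            · calc (-1:ℝ) = h * (-(1/h)) := by field_simp
                _ ≤ h * y := mul_le_mul_of_nonneg_left hy1 hh.le
            · calc h * y ≤ h * (1/h) := mul_le_mul_of_nonneg_left hy2 hh.le
                _ = 1 := by field_simp
          rw [Set.indicator_of_mem hy, hG]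
          simp only [hK, Set.indicator_of_mem hy1, mul_one]
          rw [hF]
          have e1 : (h : ℝ) * y / h = y := by field_simp
          rw [e1]
          congr 1
          congr 1
          push_cast
          rw [div_eq_iff hh']
          ring
        · have hy1 : h * y ∉ Set.Icc (-1:ℝ) 1 := by
            simp only [hAdef, Set.mem_Icc, not_and_or, not_le] at hy ⊢
            rcases hy with hy | hy
            · left
              calc h * y < h * (-(1/h)) := mul_lt_mul_of_pos_left hy hh
                _ = -1 := by field_simp
            · right
              calc (1:ℝ) = h * (1/h) := by field_simp
                _ < h * y := mul_lt_mul_of_pos_left hy hh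
          rw [Set.indicator_of_notMem hy, hG]
          simp [hK, Set.indicator_of_notMem hy1]
      rw [h2, h3, MeasureTheory.integral_indicator measurableSet_Icc]
      rw [Complex.real_smul, Complex.real_smul]
      set z := ∫ y in A, F y with hz
      have he : (1:ℂ) / (2*↑π*↑h) * (↑h * z) = (↑h / ↑h) * (1/(2*↑π) * z) := by ring
      rw [he, div_self hh', one_mul]
      push_cast
      ring
    -- difference
    have hdiff : θh h x - θ x = (1/(2*π) : ℝ) • (-(∫ y in Aᶜ, F y)) := by
      rw [hsub, hInv x, ← smul_sub]
      congr 1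
      have := MeasureTheory.integral_add_compl (measurableSet_Icc : MeasurableSet A) hFint
      rw [← this]
      ring
    have hsubset : Aᶜ ⊆ {y : ℝ | 1 / h ≤ |y|} := by
      intro y hy
      simp only [hAdef, Set.mem_compl_iff, Set.mem_Icc, not_and_or, not_le] at hy
      simp only [Set.mem_setOf_eq]
      rcases hy with hy | hy
      · have h0 : (0:ℝ) < 1/h := by positivity
        rw [abs_of_neg (by linarith : y < 0)]
        linarith
      · linarith [le_abs_self y]
    have step1 : ‖θh h x - θ x‖ ≤ (1/(2*π)) * ∫ y in Aᶜ, ‖Φθ y‖ := by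
      rw [hdiff, norm_smul, norm_neg]
      rw [Real.norm_of_nonneg (by positivity)]
      refine mul_le_mul_of_nonneg_left ?_ (by positivity)
      refine (norm_integral_le_integral_norm _).trans_eq ?_
      exact integral_congr_ae (ae_of_all _ fun y => hnormF y)
    have step2 : ∫ y in Aᶜ, ‖Φθ y‖ ≤ ∫ y in Aᶜ, h ^ (s-1) * (|y| ^ (s-1) * ‖Φθ y‖) := by
      refine setIntegral_mono_on (hΦint.norm.integrableOn)
        ((hweight'.const_mul _).integrableOn) measurableSet_Icc.compl (fun y hy => ?_)
      have h1y : 1 / h ≤ |y| := hsubset hy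
      have h2y : (1:ℝ) ≤ h * |y| := by
        rw [div_le_iff₀ hh] at h1y; nlinarith
      have h3y : (1:ℝ) ≤ h ^ (s-1) * |y| ^ (s-1) := by
        calc (1:ℝ) = 1 ^ (s-1) := (Real.one_rpow _).symm
          _ ≤ (h * |y|) ^ (s-1) := Real.rpow_le_rpow zero_le_one h2y (by linarith)
          _ = h ^ (s-1) * |y| ^ (s-1) := Real.mul_rpow hh.le (abs_nonneg y)
      calc ‖Φθ y‖ = 1 * ‖Φθ y‖ := (one_mul _).symm
        _ ≤ (h ^ (s-1) * |y| ^ (s-1)) * ‖Φθ y‖ :=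
            mul_le_mul_of_nonneg_right h3y (norm_nonneg _)
        _ = h ^ (s-1) * (|y| ^ (s-1) * ‖Φθ y‖) := by ring
    have step3 : ∫ y in Aᶜ, h ^ (s-1) * (|y| ^ (s-1) * ‖Φθ y‖)
        = h ^ (s-1) * ∫ y in Aᶜ, |y| ^ (s-1) * ‖Φθ y‖ := integral_const_mul _ _
    have step4 : ∫ y in Aᶜ, |y| ^ (s-1) * ‖Φθ y‖
        ≤ ∫ y in {y : ℝ | 1 / h ≤ |y|}, |y| ^ (s-1) * ‖Φθ y‖ :=
      setIntegral_mono_set hweight'.integrableOn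
        (ae_of_all _ fun y => by positivity) (ae_of_all _ hsubset)
    have hT0 : 0 ≤ ∫ y in {y : ℝ | 1 / h ≤ |y|}, |y| ^ (s-1) * ‖Φθ y‖ :=
      integral_nonneg fun y => by positivity
    have hrp : (0:ℝ) ≤ h ^ (s-1) := Real.rpow_nonneg hh.le _
    calc ‖θh h x - θ x‖ ≤ (1/(2*π)) * ∫ y in Aᶜ, ‖Φθ y‖ := step1
      _ ≤ (1/(2*π)) * (h ^ (s-1) * ∫ y in {y : ℝ | 1 / h ≤ |y|}, |y| ^ (s-1) * ‖Φθ y‖) := by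
          refine mul_le_mul_of_nonneg_left ?_ (by positivity)
          exact step2.trans (by rw [step3]; exact mul_le_mul_of_nonneg_left step4 hrp)
      _ ≤ (1/π) * (h ^ (s-1) * ∫ y in {y : ℝ | 1 / h ≤ |y|}, |y| ^ (s-1) * ‖Φθ y‖) := by
          refine mul_le_mul_of_nonneg_right ?_ (mul_nonneg hrp hT0)
          rw [div_le_div_iff₀ (by positivity) hπ]
          nlinarith
      _ = (h ^ (s-1) / π) * ∫ y in {y : ℝ | 1 / h ≤ |y|}, |y| ^ (s-1) * ‖Φθ y‖ := by
          ring
  refine ⟨part1, ?_⟩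
  -- Part 2: the little-o statement
  set g : ℝ → ℝ := fun y => |y| ^ (s-1) * ‖Φθ y‖ with hg
  set T : ℝ → ℝ := fun h => ∫ y in {y : ℝ | 1 / h ≤ |y|}, g y with hT
  have hS : ∀ h : ℝ, MeasurableSet {y : ℝ | 1 / h ≤ |y|} := fun h =>
    (isClosed_le continuous_const _root_.continuous_abs).measurableSet
  have hgnn : ∀ y : ℝ, 0 ≤ g y := fun y => by
    simp only [hg]; positivity
  have hTto : Tendsto T (nhdsWithin 0 (Set.Ioi 0)) (𝓝 0) := by
    have key := MeasureTheory.tendsto_integral_filter_of_dominated_convergence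
      (μ := volume) (l := nhdsWithin (0:ℝ) (Set.Ioi 0))
      (F := fun h y => Set.indicator {y : ℝ | 1/h ≤ |y|} g y)
      (f := fun _ : ℝ => (0:ℝ)) (bound := g)
      (Eventually.of_forall fun h => (hweight'.aestronglyMeasurable).indicator (hS h))
      (Eventually.of_forall fun h => ae_of_all _ fun y => ?_)
      hweight' (ae_of_all _ fun y => ?_)
    · have hTeq : T = fun h => ∫ y : ℝ, Set.indicator {y : ℝ | 1/h ≤ |y|} g y := by
        funext h
        rw [hT, MeasureTheory.integral_indicator (hS h)]
      rw [hTeq]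
      simpa using key
    · show ‖Set.indicator {y : ℝ | 1/h ≤ |y|} g y‖ ≤ g y
      by_cases hy : y ∈ {y : ℝ | 1/h ≤ |y|}
      · rw [Set.indicator_of_mem hy]
        exact le_of_eq (Real.norm_of_nonneg (hgnn y))
      · rw [Set.indicator_of_notMem hy]
        simpa using hgnn y
    · refine Tendsto.congr' ?_ tendsto_const_nhds
      have hpos : (0:ℝ) < 1/(|y|+1) := by positivity
      filter_upwards [Ioo_mem_nhdsGT_of_mem (Set.left_mem_Ico.mpr hpos)] with h hh
      obtain ⟨hh1, hh2⟩ := hh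
      have h3 : h * (|y|+1) < 1 := (lt_div_iff₀ (by positivity)).mp hh2
      have hlt : |y| < 1/h := by
        rw [lt_div_iff₀ hh1]
        nlinarith [abs_nonneg y]
      have : y ∉ {y : ℝ | 1/h ≤ |y|} := by
        simp only [Set.mem_setOf_eq, not_le]
        exact hlt
      rw [Set.indicator_of_notMem this]
  rw [Asymptotics.isLittleO_iff]
  intro c hc
  have h1 : ∀ᶠ h in nhdsWithin (0:ℝ) (Set.Ioi 0), T h < c * π :=
    hTto.eventually_lt_const (by positivity)
  filter_upwards [h1, self_mem_nhdsWithin] with h hTh hh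
  replace hh : (0:ℝ) < h := hh
  have hrp : (0:ℝ) ≤ h ^ (s-1) := Real.rpow_nonneg hh.le _
  have hbdd : BddAbove (Set.range fun x => ‖θh h x - θ x‖) :=
    ⟨(h^(s-1)/π) * T h, by rintro _ ⟨x, rfl⟩; exact part1 h hh x⟩
  have hsup_le : (⨆ x, ‖θh h x - θ x‖) ≤ (h^(s-1)/π) * T h :=
    ciSup_le fun x => part1 h hh x
  have hsup_nonneg : 0 ≤ ⨆ x, ‖θh h x - θ x‖ :=
    le_trans (norm_nonneg _) (le_ciSup hbdd 0)
  rw [Real.norm_of_nonneg hsup_nonneg, Real.norm_of_nonneg hrp]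
  refine hsup_le.trans ?_
  calc (h^(s-1)/π) * T h ≤ (h^(s-1)/π) * (c*π) :=
        mul_le_mul_of_nonneg_left hTh.le (by positivity)
    _ = c * h ^ (s-1) := by field_simp
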